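/- arXiv:2104.00069 — 5 statements merged into one kernel-verified Lean document; each statement's English description precedes it below -/
import Mathlib

section
/- Let $(E,d)$ be a metric space, $X \subseteq E$ a bounded set with at least two points, $Y$ a nonempty set, and $h : Y \to E$ with $X \subseteq \overline{h(Y)}$. Define $f(x,y) = -d(x,h(y))$. Then $\sup_{y \in Y} \inf_{x \in X} f(x,y) \le -\mathrm{diam}(X)/2 < 0 = \inf_{x \in X} \sup_{y \in Y} f(x,y)$. -/
theorem stmt_3 {E : Type*} [MetricSpace E] {Y : Type*} [Nonempty Y]
    (X : Set E) (hXb : Bornology.IsBounded X)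
    (hX2 : ∃ a ∈ X, ∃ b ∈ X, a ≠ b)
    (h : Y → E) (hXc : X ⊆ closure (Set.range h))
    (f : E → Y → ℝ) (hf : ∀ x y, f x y = -dist x (h y)) :
    (⨆ y : Y, ⨅ x : X, f x y) ≤ -(Metric.diam X) / 2 ∧
    -(Metric.diam X) / 2 < 0 ∧
    (⨅ x : X, ⨆ y : Y, f x y) = 0 := by
  obtain ⟨a, ha, b, hb, hab⟩ := hX2
  have hXne : X.Nonempty := ⟨a, ha⟩
  haveI : Nonempty X := hXne.to_subtype
  have hdiam : 0 < Metric.diam X := by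
    have := Metric.dist_le_diam_of_mem hXb ha hb
    have hd : 0 < dist a b := dist_pos.mpr hab
    linarith
  refine ⟨?_, by linarith, ?_⟩
  · -- part 1
    apply ciSup_le
    intro y
    -- f bounded below on X
    obtain ⟨C, hC⟩ := hXb.subset_closedBall (h y)
    have hbdd : BddBelow (Set.range fun x : X => f x y) := by
      refine ⟨-C, ?_⟩
      rintro r ⟨x, rfl⟩
      have := hC x.2
      simp only [Metric.mem_closedBall] at this
      dsimp only; rw [hf]; linarith
    -- show inf ≤ -(diam - ε)/2 for each pair, via dist triangle
    have key : ∀ x ∈ X, ∀ x' ∈ X, (⨅ x : X, f x y) ≤ -(dist x x') / 2 := by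
      intro x hx x' hx'
      have h1 : (⨅ z : X, f z y) ≤ f x y := ciInf_le hbdd ⟨x, hx⟩
      have h2 : (⨅ z : X, f z y) ≤ f x' y := ciInf_le hbdd ⟨x', hx'⟩
      rw [hf] at h1; rw [hf] at h2
      have := dist_triangle_right x x' (h y)
      linarith
    -- diam is sup of dists
    have hle0 : (⨅ x : X, f x y) ≤ 0 := by
      have h1 : (⨅ z : X, f z y) ≤ f a y := ciInf_le hbdd ⟨a, ha⟩
      rw [hf] at h1
      have := dist_nonneg (x := a) (y := h y)
      linarith
    by_contra hcon
    push_neg at hcon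
    have : Metric.diam X ≤ -2 * (⨅ x : X, f x y) := by
      apply Metric.diam_le_of_forall_dist_le (by linarith)
      intro x hx x' hx'
      have := key x hx x' hx'
      linarith
    linarith
  · -- part 3
    have hsup : ∀ x ∈ X, (⨆ y : Y, f x y) = 0 := by
      intro x hx
      have hub : ∀ y, f x y ≤ 0 := fun y => by rw [hf]; simpa using dist_nonneg
      have hbdd : BddAbove (Set.range fun y => f x y) := ⟨0, by rintro r ⟨y, rfl⟩; exact hub y⟩
      apply le_antisymm (ciSup_le hub)
      by_contra hc
      push_neg at hc
      have := Metric.mem_closure_iff.mp (hXc hx) (-(⨆ y : Y, f x y)) (by linarith)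
      obtain ⟨z, ⟨y, rfl⟩, hz⟩ := this
      have := le_ciSup hbdd y
      rw [hf] at this
      linarith
    have : ∀ x : X, (⨆ y : Y, f x y) = 0 := fun x => hsup x x.2
    simp only [this]
    exact ciInf_const
end

section
/- Let $X$ and $Y$ be nonempty sets, $I : X \to \mathbb{R}$ and $J : X \times Y \to \overline{\mathbb{R}}$ (extended-real-valued) functions, and let $A, B \subseteq X$ be nonempty sets such that: (a) $\sup_A I < \inf_B I$; (b) $\sup_{y \in Y} \inf_{x \in A} J(x,y) \le 0$; (c) $\inf_{x \in B} \sup_{y \in Y} J(x,y) \ge 0$; (d) $\inf_{x \in X \setminus B} \sup_{y \in Y} J(x,y) = +\infty$. Then $\sup_{y \in Y} \inf_{x \in X} (I(x)+J(x,y)) \le \sup_A I < \inf_B I \le \inf_{x \in X} \sup_{y \in Y} (I(x)+J(x,y))$. -/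
open EReal in
lemma stmt_4_aux {Y : Type*} [Nonempty Y] (c : ℝ) (g : Y → EReal) (t : ℝ)
    (h : (↑(t - c) : EReal) < ⨆ y, g y) : (t : EReal) ≤ ⨆ y, ((c : EReal) + g y) := by
  obtain ⟨y, hy⟩ := lt_iSup_iff.1 h
  have h1 : ((t - c : ℝ) : EReal) + (c : EReal) < g y + (c : EReal) :=
    EReal.add_lt_add_right_coe hy c
  have h2 : ((t - c : ℝ) : EReal) + (c : EReal) = (t : EReal) := by
    rw [← EReal.coe_add]; norm_num
  rw [h2] at h1
  calc (t : EReal) ≤ (c : EReal) + g y := by rw [add_comm]; exact h1.le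
    _ ≤ ⨆ y, ((c : EReal) + g y) := le_iSup (fun y => (c : EReal) + g y) y

open EReal in
theorem stmt_4 {X Y : Type*} [Nonempty X] [Nonempty Y]
    (I : X → ℝ) (J : X × Y → EReal)
    (A B : Set X) (hA : A.Nonempty) (hB : B.Nonempty)
    (ha : (⨆ x : A, (I x : EReal)) < ⨅ x : B, (I x : EReal))
    (hb : (⨆ y : Y, ⨅ x : A, J (x, y)) ≤ 0)
    (hc : 0 ≤ ⨅ x : B, ⨆ y : Y, J (x, y))
    (hd : (⨅ x : ↥(Set.univ \ B), ⨆ y : Y, J ((x : X), y)) = ⊤) :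
    (⨆ y : Y, ⨅ x : X, ((I x : EReal) + J (x, y))) ≤ (⨆ x : A, (I x : EReal)) ∧
    (⨆ x : A, (I x : EReal)) < (⨅ x : B, (I x : EReal)) ∧
    (⨅ x : B, (I x : EReal)) ≤ ⨅ x : X, ⨆ y : Y, ((I x : EReal) + J (x, y)) := by
  obtain ⟨a0, ha0⟩ := hA
  refine ⟨?_, ha, ?_⟩
  · -- part 1
    refine iSup_le fun y => ?_
    rw [← EReal.le_of_forall_lt_iff_le]
    intro t ht
    -- the sup over A is not ⊤ and not ⊥
    have hne : (⨆ x : A, (I x : EReal)) ≠ ⊤ := (ht.trans (EReal.coe_lt_top t)).ne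
    have hnb : (⨆ x : A, (I x : EReal)) ≠ ⊥ := by
      refine ne_bot_of_le_ne_bot (EReal.coe_ne_bot (I a0)) ?_
      exact le_iSup (fun x : A => (I x : EReal)) ⟨a0, ha0⟩
    lift (⨆ x : A, (I x : EReal)) to ℝ using ⟨hne, hnb⟩ with s hs
    have hinf : (⨅ x : A, J (x, y)) ≤ 0 := le_trans (le_iSup (fun y => ⨅ x : A, J ((x:X), y)) y) hb
    have hst : (⨅ x : A, J (x, y)) < ((t - s : ℝ) : EReal) := by
      refine lt_of_le_of_lt hinf ?_
      have : (0:ℝ) < t - s := by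
        have := EReal.coe_lt_coe_iff.1 ht; linarith
      exact_mod_cast this
    obtain ⟨x, hx⟩ := iInf_lt_iff.1 hst
    have hIx : (I (x:X) : EReal) ≤ (s : EReal) := hs ▸ le_iSup (fun x : A => (I x : EReal)) x
    have h1 : J ((x:X), y) + (I (x:X) : EReal) < ((t - s : ℝ) : EReal) + (s : EReal) :=
      EReal.add_lt_add_of_lt_of_le hx hIx (EReal.coe_ne_bot _) (EReal.coe_ne_top _)
    have h2 : ((t - s : ℝ) : EReal) + (s : EReal) = (t : EReal) := by
      rw [← EReal.coe_add]; norm_num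
    calc (⨅ x : X, ((I x : EReal) + J (x, y))) ≤ (I (x:X) : EReal) + J ((x:X), y) :=
          iInf_le _ (x : X)
      _ = J ((x:X), y) + (I (x:X) : EReal) := add_comm _ _
      _ ≤ (t : EReal) := h2 ▸ h1.le
  · -- part 3
    refine le_iInf fun x => ?_
    by_cases hxB : x ∈ B
    · have hIB : (⨅ x : B, (I x : EReal)) ≤ (I x : EReal) :=
        iInf_le (fun x : B => (I x : EReal)) ⟨x, hxB⟩
      refine hIB.trans ?_
      rw [← EReal.ge_of_forall_gt_iff_ge]
      intro t ht
      have hsup : (0 : EReal) ≤ ⨆ y : Y, J (x, y) :=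
        hc.trans (iInf_le (fun x : B => ⨆ y : Y, J ((x:X), y)) ⟨x, hxB⟩)
      refine stmt_4_aux (I x) (fun y => J (x, y)) t (lt_of_lt_of_le ?_ hsup)
      have : t - I x < 0 := by
        have := EReal.coe_lt_coe_iff.1 ht; linarith
      exact_mod_cast this
    · have hsup : (⨆ y : Y, J (x, y)) = ⊤ := by
        have := iInf_eq_top.1 hd ⟨x, by simp [hxB]⟩
        exact this
      refine le_trans le_top ?_
      rw [top_le_iff, ← top_le_iff, ← EReal.ge_of_forall_gt_iff_ge]
      intro t _
      refine stmt_4_aux (I x) (fun y => J (x, y)) t ?_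
      rw [hsup]; exact EReal.coe_lt_top _
end

section
/- Let $X$ be a nonempty set, $Y$ a nonempty set, $f : X \times Y \to \mathbb{R}$, $\psi : Y \to \mathbb{R}$, and $\varphi : X \to \mathbb{R}$ a bounded function. Set $\alpha = \sup_{y \in Y}\inf_{x \in X}(f(x,y)+\psi(y))$ and $\beta = \inf_{x \in X}\sup_{y \in Y}(f(x,y)+\psi(y))$, and assume $\alpha < \beta$ (both finite). Let $S \subseteq Y$ satisfy $\inf_{x \in X}\sup_{y \in S}(f(x,y)+\psi(y)) = \beta$. Then for every $\lambda > \frac{2\sup_X |\varphi|}{\beta - \alpha}$, setting $g(x,y) = \lambda(f(x,y)+\psi(y)) + \varphi(x)$, one has $\sup_{y \in S}\inf_{x \in X} g(x,y) < \inf_{x \in X}\sup_{y \in S} g(x,y)$. -/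
theorem stmt_6 {X Y : Type*} [Nonempty X] [Nonempty Y]
    (f : X → Y → ℝ) (ψ : Y → ℝ) (φ : X → ℝ)
    (hφ : ∃ M, ∀ x, |φ x| ≤ M)
    (α β : ℝ)
    (hα : α = ⨆ y : Y, ⨅ x : X, (f x y + ψ y))
    (hβ : β = ⨅ x : X, ⨆ y : Y, (f x y + ψ y))
    (hαβ : α < β)
    (S : Set Y) (hS : S.Nonempty)
    (hSβ : (⨅ x : X, ⨆ y : S, (f x y + ψ y)) = β)
    (lam : ℝ) (hlam : lam > 2 * (⨆ x : X, |φ x|) / (β - α))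
    (g : X → Y → ℝ) (hg : ∀ x y, g x y = lam * (f x y + ψ y) + φ x) :
    (⨆ y : S, ⨅ x : X, g x y) < ⨅ x : X, ⨆ y : S, g x y := by
  classical
  haveI : Nonempty S := hS.to_subtype
  obtain ⟨M0, hM0⟩ := hφ
  have hbddφ : BddAbove (Set.range fun x => |φ x|) :=
    ⟨M0, by rintro _ ⟨x, rfl⟩; exact hM0 x⟩
  set M : ℝ := ⨆ x : X, |φ x| with hMdef
  have hM : ∀ x, |φ x| ≤ M := fun x => le_ciSup hbddφ x
  have hMnonneg : 0 ≤ M := (abs_nonneg _).trans (hM (Classical.arbitrary X))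
  have hβα : 0 < β - α := sub_pos.mpr hαβ
  have hlam0 : 0 < lam :=
    lt_of_le_of_lt (div_nonneg (by linarith) hβα.le) hlam
  have hkey : 2 * M < lam * (β - α) := by
    rw [gt_iff_lt, div_lt_iff₀ hβα] at hlam
    linarith
  have hgub : ∀ x y, g x y ≤ lam * (f x y + ψ y) + M := by
    intro x y
    rw [hg]
    have := (abs_le.mp (hM x)).2
    linarith
  have hglb : ∀ x y, lam * (f x y + ψ y) - M ≤ g x y := by
    intro x y
    rw [hg]
    have := (abs_le.mp (hM x)).1
    linarith
  -- transfer of non-boundedness from h to g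
  have hgba : ∀ x, ¬ BddAbove (Set.range fun y : S => f x ↑y + ψ ↑y) →
      ¬ BddAbove (Set.range fun y : S => g x ↑y) := by
    intro x hba hbg
    obtain ⟨c, hc⟩ := hbg
    apply hba
    refine ⟨(c + M) / lam, ?_⟩
    rintro _ ⟨y, rfl⟩
    show f x ↑y + ψ ↑y ≤ (c + M) / lam
    rw [le_div_iff₀ hlam0]
    have h1 : g x ↑y ≤ c := hc ⟨y, rfl⟩
    have := hglb x ↑y
    nlinarith
  by_cases hbI : BddAbove (Set.range fun y : Y => ⨅ x : X, (f x y + ψ y))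
  · -- main case
    have hIα : ∀ y : Y, (⨅ x : X, (f x y + ψ y)) ≤ α := by
      intro y
      rw [hα]
      exact le_ciSup hbI y
    -- LHS bound
    have hL : (⨆ y : S, ⨅ x : X, g x ↑y) ≤ lam * α + M := by
      apply ciSup_le
      intro y
      by_cases hb : BddBelow (Set.range fun x => f x ↑y + ψ ↑y)
      · obtain ⟨c, hc⟩ := hb
        have hbg : BddBelow (Set.range fun x => g x ↑y) := by
          refine ⟨lam * c - M, ?_⟩
          rintro _ ⟨x, rfl⟩
          have h1 : c ≤ f x ↑y + ψ ↑y := hc ⟨x, rfl⟩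
          have := hglb x ↑y
          nlinarith
        have h2 : ∀ x, (⨅ x' : X, g x' ↑y) ≤ lam * (f x ↑y + ψ ↑y) + M := fun x =>
          (ciInf_le hbg x).trans (hgub x ↑y)
        have h3 : ((⨅ x' : X, g x' ↑y) - M) / lam ≤ ⨅ x : X, (f x ↑y + ψ ↑y) := by
          apply le_ciInf
          intro x
          rw [div_le_iff₀ hlam0]
          have := h2 x
          nlinarith
        have h4 : ((⨅ x' : X, g x' ↑y) - M) / lam ≤ α := h3.trans (hIα ↑y)
        rw [div_le_iff₀ hlam0] at h4
        nlinarith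
      · have hbg : ¬ BddBelow (Set.range fun x => g x ↑y) := by
          intro hbg
          obtain ⟨c, hc⟩ := hbg
          apply hb
          refine ⟨(c - M) / lam, ?_⟩
          rintro _ ⟨x, rfl⟩
          show (c - M) / lam ≤ f x ↑y + ψ ↑y
          rw [div_le_iff₀ hlam0]
          have h1 : c ≤ g x ↑y := hc ⟨x, rfl⟩
          have := hgub x ↑y
          nlinarith
        rw [Real.iInf_of_not_bddBelow hbg]
        have h0 : (0 : ℝ) ≤ α := by
          have := hIα ↑y
          rwa [Real.iInf_of_not_bddBelow hb] at this
        nlinarith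
    -- RHS bound
    have hR : lam * β - M ≤ ⨅ x : X, ⨆ y : S, g x ↑y := by
      by_cases hbT : BddBelow (Set.range fun x => ⨆ y : S, (f x ↑y + ψ ↑y))
      · apply le_ciInf
        intro x
        have hTx : β ≤ ⨆ y : S, (f x ↑y + ψ ↑y) := by
          rw [← hSβ]
          exact ciInf_le hbT x
        by_cases hba : BddAbove (Set.range fun y : S => f x ↑y + ψ ↑y)
        · have hbag : BddAbove (Set.range fun y : S => g x ↑y) := by
            obtain ⟨c, hc⟩ := hba
            refine ⟨lam * c + M, ?_⟩
            rintro _ ⟨y, rfl⟩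
            have h1 : f x ↑y + ψ ↑y ≤ c := hc ⟨y, rfl⟩
            have := hgub x ↑y
            nlinarith
          have h2 : ∀ y : S, lam * (f x ↑y + ψ ↑y) - M ≤ ⨆ y' : S, g x ↑y' := fun y =>
            (hglb x ↑y).trans (le_ciSup hbag y)
          have h3 : (⨆ y : S, (f x ↑y + ψ ↑y)) ≤ ((⨆ y' : S, g x ↑y') + M) / lam := by
            apply ciSup_le
            intro y
            rw [le_div_iff₀ hlam0]
            have := h2 y
            nlinarith
          have h4 := hTx.trans h3
          rw [le_div_iff₀ hlam0] at h4
          nlinarith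
        · have hbg := hgba x hba
          rw [Real.iSup_of_not_bddAbove hbg]
          have hT0 : β ≤ 0 := by rwa [Real.iSup_of_not_bddAbove hba] at hTx
          nlinarith
      · have hβ0 : β = 0 := by
          rw [← hSβ]
          exact Real.iInf_of_not_bddBelow hbT
        have hGub : ∀ x, (⨆ y : S, g x ↑y) ≤ lam * (⨆ y : S, (f x ↑y + ψ ↑y)) + M := by
          intro x
          by_cases hba : BddAbove (Set.range fun y : S => f x ↑y + ψ ↑y)
          · apply ciSup_le
            intro y
            have h1 : f x ↑y + ψ ↑y ≤ ⨆ y' : S, (f x ↑y' + ψ ↑y') := le_ciSup hba y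
            have := hgub x ↑y
            nlinarith
          · have hbg := hgba x hba
            rw [Real.iSup_of_not_bddAbove hbg, Real.iSup_of_not_bddAbove hba]
            nlinarith
        have hbG : ¬ BddBelow (Set.range fun x => ⨆ y : S, g x ↑y) := by
          intro hbG
          obtain ⟨c, hc⟩ := hbG
          apply hbT
          refine ⟨(c - M) / lam, ?_⟩
          rintro _ ⟨x, rfl⟩
          show (c - M) / lam ≤ ⨆ y : S, (f x ↑y + ψ ↑y)
          rw [div_le_iff₀ hlam0]
          have h1 : c ≤ ⨆ y : S, g x ↑y := hc ⟨x, rfl⟩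
          have := hGub x
          nlinarith
        rw [Real.iInf_of_not_bddBelow hbG, hβ0]
        nlinarith
    calc (⨆ y : S, ⨅ x : X, g x ↑y) ≤ lam * α + M := hL
      _ < lam * β - M := by nlinarith
      _ ≤ _ := hR
  · -- degenerate case: contradiction
    exfalso
    have hball : ∀ x, ¬ BddAbove (Set.range fun y : Y => f x y + ψ y) := by
      intro x hbx
      obtain ⟨c, hc⟩ := hbx
      apply hbI
      refine ⟨max c 0, ?_⟩
      rintro _ ⟨y, rfl⟩
      show (⨅ x : X, (f x y + ψ y)) ≤ max c 0
      by_cases hb : BddBelow (Set.range fun x' : X => f x' y + ψ y)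
      · exact le_max_of_le_left ((ciInf_le hb x).trans (hc ⟨y, rfl⟩))
      · rw [Real.iInf_of_not_bddBelow hb]
        exact le_max_right _ _
    have hβ0 : β = 0 := by
      rw [hβ]
      have h1 : ∀ x, (⨆ y : Y, (f x y + ψ y)) = 0 := fun x =>
        Real.iSup_of_not_bddAbove (hball x)
      simp only [h1]
      exact ciInf_const
    have hα0 : α = 0 := by
      rw [hα]
      exact Real.iSup_of_not_bddAbove hbI
    rw [hα0, hβ0] at hαβ
    exact absurd hαβ (lt_irrefl 0)
end

section
/- Let $X$ be a compact subset of a normed real vector space $(E, \|\cdot\|)$ with at least two points, and let $Y \subseteq E$ be a convex set with $X \subseteq \overline{Y}$. Let $S \subseteq Y$ be a convex set dense in $Y$, let $\gamma : X \to \mathbb{R}$ be an upper semicontinuous bounded function, and let $\lambda > \frac{4 \sup_X |\gamma|}{\mathrm{diam}(X)}$. Then there exists $y^* \in S$ such that the function $x \mapsto \gamma(x) + \lambda \|x - y^*\|$ attains its maximum on $X$ at at least two distinct points. -/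
/-!
Let `F y` be the maximum over `X` of `γ x + λ ‖x - y‖`; it is `λ`-Lipschitz. Put
`r = (diam X - 4 sup |γ| / λ) / 2 > 0`, take a finite `r`-net `C ⊆ S` of `X` and minimise `F` over
the compact convex hull `K ⊆ S` of `C`, at `y`. Every maximiser `x₁` at `y` satisfies
`‖x₁ - y‖ ≥ r`, so it is strictly closer to some net point `c` than to `y`. Since `F` does not
decrease from `y` towards `c`, maximisers at the points of the segment `[y, c]` close to `y` are no
farther from `y` than from `c`; their limit is a maximiser `x₂` at `y` with the same property, so
`x₂ ≠ x₁`.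
-/

open Filter Topology

theorem IsCompact.exists_finite_subset_forall_exists_dist_lt {α : Type*} [PseudoMetricSpace α]
    {X S : Set α} (hXc : IsCompact X) (hXS : X ⊆ closure S) {ε : ℝ} (hε : 0 < ε) :
    ∃ C ⊆ S, C.Finite ∧ ∀ x ∈ X, ∃ c ∈ C, dist x c < ε := by
  obtain ⟨t, ht⟩ := hXc.elim_finite_subcover (fun p : S => Metric.ball (p : α) ε)
    (fun _ => Metric.isOpen_ball) fun x hx => by
      obtain ⟨p, hp, hxp⟩ := Metric.mem_closure_iff.mp (hXS hx) ε hε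
      exact Set.mem_iUnion.mpr ⟨⟨p, hp⟩, hxp⟩
  refine ⟨(↑) '' (t : Set S), by rintro _ ⟨p, -, rfl⟩; exact p.2, t.finite_toSet.image _,
    fun x hx => ?_⟩
  obtain ⟨p, hp, hxp⟩ := Set.mem_iUnion₂.mp (ht hx)
  exact ⟨p, ⟨p, hp, rfl⟩, hxp⟩

section SeminormedAddCommGroup

variable {E : Type*} [SeminormedAddCommGroup E] {X : Set E} {γ : E → ℝ} {lam : ℝ}

noncomputable def farthestValue (X : Set E) (γ : E → ℝ) (lam : ℝ) (y : E) : ℝ :=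
  sSup ((fun x => γ x + lam * ‖x - y‖) '' X)

theorem exists_isMaxOn_add_mul_norm_sub (hXc : IsCompact X) (hne : X.Nonempty)
    (hγ : UpperSemicontinuousOn γ X) (lam : ℝ) (y : E) :
    ∃ z ∈ X, IsMaxOn (fun x => γ x + lam * ‖x - y‖) X z :=
  (hγ.add (by fun_prop : Continuous fun x => lam * ‖x - y‖).continuousOn.upperSemicontinuousOn
    ).exists_isMaxOn hne hXc

theorem IsMaxOn.farthestValue_eq {y z : E} (hz : z ∈ X)
    (hmax : IsMaxOn (fun x => γ x + lam * ‖x - y‖) X z) :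
    farthestValue X γ lam y = γ z + lam * ‖z - y‖ :=
  IsGreatest.csSup_eq ⟨⟨z, hz, rfl⟩, by rintro _ ⟨x, hx, rfl⟩; exact hmax hx⟩

theorem le_farthestValue (hXc : IsCompact X) (hγ : UpperSemicontinuousOn γ X) {x : E}
    (hx : x ∈ X) (y : E) : γ x + lam * ‖x - y‖ ≤ farthestValue X γ lam y := by
  obtain ⟨z, hz, hmax⟩ := exists_isMaxOn_add_mul_norm_sub hXc ⟨x, hx⟩ hγ lam y
  rw [hmax.farthestValue_eq hz]
  exact hmax hx

theorem lipschitzWith_farthestValue (hXc : IsCompact X) (hne : X.Nonempty)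
    (hγ : UpperSemicontinuousOn γ X) (hlam : 0 ≤ lam) :
    LipschitzWith lam.toNNReal (farthestValue X γ lam) := by
  refine LipschitzWith.of_le_add_mul' lam fun y y' => ?_
  obtain ⟨z, hz, hmax⟩ := exists_isMaxOn_add_mul_norm_sub hXc hne hγ lam y
  have htri : ‖z - y‖ ≤ ‖z - y'‖ + dist y y' := by
    rw [dist_eq_norm, norm_sub_rev y y']
    exact norm_sub_le_norm_sub_add_norm_sub z y' y
  calc farthestValue X γ lam y = γ z + lam * ‖z - y‖ := hmax.farthestValue_eq hz
    _ ≤ γ z + lam * ‖z - y'‖ + lam * dist y y' := by nlinarith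
    _ ≤ farthestValue X γ lam y' + lam * dist y y' := by
      gcongr
      exact le_farthestValue hXc hγ hz y'

theorem diam_le_of_isMaxOn_add_mul_norm_sub {M : ℝ} (hM : ∀ x ∈ X, |γ x| ≤ M) (hlam : 0 < lam)
    {y z : E} (hz : z ∈ X) (hmax : IsMaxOn (fun x => γ x + lam * ‖x - y‖) X z) :
    Metric.diam X ≤ 2 * ‖z - y‖ + 4 * M / lam := by
  have hnear : ∀ a ∈ X, ‖a - y‖ ≤ ‖z - y‖ + 2 * M / lam := fun a ha => by
    have hle : γ a + lam * ‖a - y‖ ≤ γ z + lam * ‖z - y‖ := hmax ha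
    rw [← sub_le_iff_le_add', le_div_iff₀ hlam]
    linarith [abs_le.mp (hM a ha), abs_le.mp (hM z hz)]
  refine Metric.diam_le_of_forall_dist_le_of_nonempty ⟨z, hz⟩ fun a ha b hb => ?_
  have htri : ‖a - b‖ ≤ ‖a - y‖ + ‖b - y‖ := by
    rw [← norm_sub_rev y b]
    exact norm_sub_le_norm_sub_add_norm_sub a y b
  have h4 : 4 * M / lam = 2 * M / lam + 2 * M / lam := by ring
  rw [dist_eq_norm]
  linarith [hnear a ha, hnear b hb]

theorem isMaxOn_add_mul_norm_sub_of_tendsto {ι : Type*} {l : Filter ι} [l.NeBot] (hγ : UpperSemicontinuousOn γ X)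
    {y z : ι → E} {y₀ z₀ : E} (hzX : ∀ i, z i ∈ X) (hz₀ : z₀ ∈ X)
    (hmax : ∀ i, IsMaxOn (fun x => γ x + lam * ‖x - y i‖) X (z i))
    (hy : Tendsto y l (𝓝 y₀)) (hz : Tendsto z l (𝓝 z₀)) :
    IsMaxOn (fun x => γ x + lam * ‖x - y₀‖) X z₀ := by
  intro w hw
  change γ w + lam * ‖w - y₀‖ ≤ γ z₀ + lam * ‖z₀ - y₀‖
  refine le_of_forall_pos_le_add fun η hη => ?_
  have hγz : ∀ᶠ i in l, γ (z i) < γ z₀ + η :=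
    (tendsto_nhdsWithin_iff.mpr ⟨hz, .of_forall hzX⟩).eventually
      (hγ z₀ hz₀ _ (lt_add_of_pos_right (γ z₀) hη))
  have hle : ∀ᶠ i in l, γ w + lam * ‖w - y i‖ ≤ γ z₀ + η + lam * ‖z i - y i‖ := by
    filter_upwards [hγz] with i hi
    have hwi : γ w + lam * ‖w - y i‖ ≤ γ (z i) + lam * ‖z i - y i‖ := hmax i hw
    linarith
  have hlim := le_of_tendsto_of_tendsto
    (((tendsto_const_nhds.sub hy).norm.const_mul lam).const_add (γ w))
    (((hz.sub hy).norm.const_mul lam).const_add (γ z₀ + η)) hle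
  linarith

end SeminormedAddCommGroup

section NormedSpace

variable {E : Type*} [SeminormedAddCommGroup E] [NormedSpace ℝ E] {X : Set E} {γ : E → ℝ} {lam : ℝ}

theorem norm_sub_le_norm_sub_of_farthestValue_le (hXc : IsCompact X)
    (hγ : UpperSemicontinuousOn γ X) (hlam : 0 < lam) {y c z : E} {t : ℝ} (ht₀ : 0 < t)
    (ht₁ : t ≤ 1) (hF : farthestValue X γ lam y ≤ farthestValue X γ lam ((1 - t) • y + t • c))
    (hz : z ∈ X) (hmax : IsMaxOn (fun x => γ x + lam * ‖x - ((1 - t) • y + t • c)‖) X z) :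
    ‖z - y‖ ≤ ‖z - c‖ := by
  have hfarther : ‖z - y‖ ≤ ‖z - ((1 - t) • y + t • c)‖ := by
    have := le_farthestValue hXc hγ (lam := lam) hz y
    rw [hmax.farthestValue_eq hz] at hF
    exact le_of_mul_le_mul_left (by linarith) hlam
  have hconv : ‖z - ((1 - t) • y + t • c)‖ ≤ (1 - t) * ‖z - y‖ + t * ‖z - c‖ := by
    rw [show z - ((1 - t) • y + t • c) = (1 - t) • (z - y) + t • (z - c) by module]
    refine (norm_add_le _ _).trans_eq ?_
    rw [norm_smul, norm_smul, Real.norm_of_nonneg (sub_nonneg.mpr ht₁),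
      Real.norm_of_nonneg ht₀.le]
  exact le_of_mul_le_mul_left (by linarith) ht₀

theorem exists_isMaxOn_norm_sub_le_of_isMinOn (hXc : IsCompact X) (hne : X.Nonempty)
    (hγ : UpperSemicontinuousOn γ X) (hlam : 0 < lam) {K : Set E} (hK : Convex ℝ K) {y c : E}
    (hy : y ∈ K) (hc : c ∈ K) (hmin : IsMinOn (farthestValue X γ lam) K y) :
    ∃ z ∈ X, IsMaxOn (fun x => γ x + lam * ‖x - y‖) X z ∧ ‖z - y‖ ≤ ‖z - c‖ := by
  set t : ℕ → ℝ := fun n => 1 / (n + 1)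
  have ht₀ : ∀ n, 0 < t n := fun n => by positivity
  have ht₁ : ∀ n, t n ≤ 1 := fun n => by
    simpa only [t] using div_le_one_of_le₀ (by simp) (by positivity)
  have ht : Tendsto t atTop (𝓝 0) := tendsto_one_div_add_atTop_nhds_zero_nat
  have hyt : Tendsto (fun n => (1 - t n) • y + t n • c) atTop (𝓝 y) := by
    simpa using ((tendsto_const_nhds (x := (1 : ℝ)).sub ht).smul_const y).add (ht.smul_const c)
  choose z hzX hzmax using fun n =>
    exists_isMaxOn_add_mul_norm_sub hXc hne hγ lam ((1 - t n) • y + t n • c)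
  have hclose : ∀ n, ‖z n - y‖ ≤ ‖z n - c‖ := fun n =>
    norm_sub_le_norm_sub_of_farthestValue_le hXc hγ hlam (ht₀ n) (ht₁ n)
      (hmin (hK hy hc (sub_nonneg.mpr (ht₁ n)) (ht₀ n).le (sub_add_cancel 1 (t n))))
      (hzX n) (hzmax n)
  obtain ⟨z₀, hz₀, φ, hφ, hzφ⟩ := hXc.tendsto_subseq hzX
  refine ⟨z₀, hz₀, isMaxOn_add_mul_norm_sub_of_tendsto hγ (fun n => hzX (φ n)) hz₀ (fun n => hzmax (φ n))
    (hyt.comp hφ.tendsto_atTop) hzφ, ?_⟩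
  exact le_of_tendsto_of_tendsto' (hzφ.sub_const y).norm (hzφ.sub_const c).norm
    fun n => hclose (φ n)

end NormedSpace

theorem stmt_8_general {E : Type*} [NormedAddCommGroup E] [NormedSpace ℝ E]
    (X : Set E) (hXc : IsCompact X) (hX2 : ∃ a ∈ X, ∃ b ∈ X, a ≠ b)
    (Y : Set E) (hXY : X ⊆ closure Y)
    (S : Set E) (hSconv : Convex ℝ S) (hSdense : Y ⊆ closure S)
    (γ : E → ℝ) (hγusc : UpperSemicontinuousOn γ X) (hγb : ∃ M, ∀ x ∈ X, |γ x| ≤ M)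
    (lam : ℝ) (hlam : lam > 4 * (⨆ x : X, |γ x|) / Metric.diam X) :
    ∃ y ∈ S, ∃ a ∈ X, ∃ b ∈ X, a ≠ b ∧
      IsMaxOn (fun x => γ x + lam * ‖x - y‖) X a ∧
      IsMaxOn (fun x => γ x + lam * ‖x - y‖) X b := by
  obtain ⟨a, ha, b, hb, hab⟩ := hX2
  obtain ⟨M₀, hM₀⟩ := hγb
  set M := ⨆ x : X, |γ x|
  have hM : ∀ x ∈ X, |γ x| ≤ M := fun x hx =>
    le_ciSup (f := fun x : X => |γ x|) ⟨M₀, by rintro _ ⟨x, rfl⟩; exact hM₀ x x.2⟩ ⟨x, hx⟩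
  have hD : 0 < Metric.diam X :=
    (dist_pos.mpr hab).trans_le (Metric.dist_le_diam_of_mem hXc.isBounded ha hb)
  have hlam0 : 0 < lam :=
    (div_nonneg (by linarith [(abs_nonneg _).trans (hM a ha)]) hD.le).trans_lt hlam
  have hgap : 4 * M / lam < Metric.diam X := by
    rw [div_lt_iff₀ hlam0]
    exact ((div_lt_iff₀ hD).mp hlam).trans_eq (mul_comm _ _)
  obtain ⟨C, hCS, hCfin, hC⟩ := hXc.exists_finite_subset_forall_exists_dist_lt
    (hXY.trans (closure_minimal hSdense isClosed_closure))
    (half_pos (sub_pos.mpr hgap))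
  obtain ⟨c₀, hc₀C, -⟩ := hC a ha
  obtain ⟨y, hyK, hymin⟩ := (hCfin.isCompact_convexHull ℝ).exists_isMinOn
    ⟨c₀, subset_convexHull ℝ C hc₀C⟩
    (lipschitzWith_farthestValue hXc ⟨a, ha⟩ hγusc hlam0.le).continuous.continuousOn
  obtain ⟨x₁, hx₁, hmax₁⟩ := exists_isMaxOn_add_mul_norm_sub hXc ⟨a, ha⟩ hγusc lam y
  obtain ⟨c, hcC, hx₁c⟩ := hC x₁ hx₁
  obtain ⟨x₂, hx₂, hmax₂, hx₂c⟩ := exists_isMaxOn_norm_sub_le_of_isMinOn hXc ⟨a, ha⟩ hγusc hlam0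
    (convex_convexHull ℝ C) hyK (subset_convexHull ℝ C hcC) hymin
  refine ⟨y, convexHull_min hCS hSconv hyK, x₁, hx₁, x₂, hx₂, ?_, hmax₁, hmax₂⟩
  rintro rfl
  have hfar := diam_le_of_isMaxOn_add_mul_norm_sub hM hlam0 hx₁ hmax₁
  rw [dist_eq_norm] at hx₁c
  linarith

theorem stmt_8 {E : Type*} [NormedAddCommGroup E] [NormedSpace ℝ E]
    (X : Set E) (hXc : IsCompact X) (hX2 : ∃ a ∈ X, ∃ b ∈ X, a ≠ b)
    (Y : Set E) (hYconv : Convex ℝ Y) (hXY : X ⊆ closure Y)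
    (S : Set E) (hSY : S ⊆ Y) (hSconv : Convex ℝ S) (hSdense : Y ⊆ closure S)
    (γ : E → ℝ) (hγusc : UpperSemicontinuousOn γ X) (hγb : ∃ M, ∀ x ∈ X, |γ x| ≤ M)
    (lam : ℝ) (hlam : lam > 4 * (⨆ x : X, |γ x|) / Metric.diam X) :
    ∃ y ∈ S, ∃ a ∈ X, ∃ b ∈ X, a ≠ b ∧
      IsMaxOn (fun x => γ x + lam * ‖x - y‖) X a ∧
      IsMaxOn (fun x => γ x + lam * ‖x - y‖) X b :=
  stmt_8_general X hXc hX2 Y hXY S hSconv hSdense γ hγusc hγb lam hlam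
end

section
/- Let $c, d > 0$, $p > 1$, and let $h : \Omega \times \mathbb{R} \times \mathbb{R}^n \to \mathbb{R}$ satisfy $c|\eta|^p - d \le h(x,\xi,\eta)$ for all $(x,\xi,\eta)$, and $\lim_{|\xi| \to +\infty} \inf_{(x,\eta) \in \Omega \times \mathbb{R}^n} \frac{h(x,\xi,\eta)}{|\sigma(\xi)| + 1} = +\infty$ for a continuous function $\sigma : \mathbb{R} \to \mathbb{R}$. Then for every $\gamma \in L^\infty(\Omega)$ there exist constants $\delta > 0$ and $C \ge 0$ such that $\frac{c}{2}|\eta|^p - C \le h(x,\xi,\eta) + \gamma(x)\sigma(\xi)$ for all $(x,\xi,\eta) \in \Omega \times \mathbb{R} \times \mathbb{R}^n$, where one may take $C = d + \|\gamma\|_{L^\infty} \sup_{|\xi| \le \delta} |\sigma(\xi)|$. -/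
theorem stmt_14 {n : ℕ} (Ω : Set (Fin n → ℝ)) (hΩ : Ω.Nonempty)
    (c d p : ℝ) (hc : 0 < c) (hd : 0 < d) (hp : 1 < p)
    (σ : ℝ → ℝ) (hσ : Continuous σ)
    (h : (Fin n → ℝ) → ℝ → (Fin n → ℝ) → ℝ)
    (hcoer : ∀ x ∈ Ω, ∀ (ξ : ℝ) (η : Fin n → ℝ),
      c * ‖η‖ ^ p - d ≤ h x ξ η)
    (hlim : ∀ M : ℝ, ∃ R : ℝ, ∀ ξ : ℝ, R ≤ |ξ| →
      ∀ x ∈ Ω, ∀ η : Fin n → ℝ, M * (|σ ξ| + 1) ≤ h x ξ η)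
    (γ : (Fin n → ℝ) → ℝ) (K : ℝ) (hγ : ∀ x ∈ Ω, |γ x| ≤ K) :
    ∃ δ > (0 : ℝ), ∃ C : ℝ, 0 ≤ C ∧ C = d + K * (⨆ ξ : {ξ : ℝ // |ξ| ≤ δ}, |σ (ξ : ℝ)|) ∧
      ∀ x ∈ Ω, ∀ (ξ : ℝ) (η : Fin n → ℝ),
        c / 2 * ‖η‖ ^ p - C ≤ h x ξ η + γ x * σ ξ := by
  obtain ⟨x0, hx0⟩ := hΩ
  have hK : 0 ≤ K := (abs_nonneg _).trans (hγ x0 hx0)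
  obtain ⟨R, hR⟩ := hlim (2 * K)
  set δ := max R 1 with hδ
  have hδpos : (0 : ℝ) < δ := lt_of_lt_of_le one_pos (le_max_right _ _)
  set S := ⨆ ξ : {ξ : ℝ // |ξ| ≤ δ}, |σ (ξ : ℝ)| with hSdef
  have hbdd : BddAbove (Set.range fun ξ : {ξ : ℝ // |ξ| ≤ δ} => |σ (ξ : ℝ)|) := by
    obtain ⟨B, hB⟩ := (isCompact_Icc (a := -δ) (b := δ)).bddAbove_image
      (hσ.abs.continuousOn)
    refine ⟨B, ?_⟩
    rintro y ⟨⟨ξ, hξ⟩, rfl⟩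
    exact hB ⟨ξ, abs_le.mp hξ, rfl⟩
  have hS0 : 0 ≤ S := by
    have : |σ 0| ≤ S := le_ciSup hbdd ⟨0, by simpa using hδpos.le⟩
    exact (abs_nonneg _).trans this
  refine ⟨δ, hδpos, d + K * S, by positivity, rfl, ?_⟩
  intro x hx ξ η
  have hγx := hγ x hx
  have hnorm : 0 ≤ ‖η‖ ^ p := Real.rpow_nonneg (norm_nonneg _) p
  have hγσ : |γ x * σ ξ| ≤ K * |σ ξ| := by
    rw [abs_mul]
    exact mul_le_mul_of_nonneg_right hγx (abs_nonneg _)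
  have habs := abs_le.mp hγσ
  rcases le_or_gt (|ξ|) δ with hle | hlt
  · have hSle : |σ ξ| ≤ S := le_ciSup hbdd ⟨ξ, hle⟩
    have h1 := hcoer x hx ξ η
    nlinarith [mul_le_mul_of_nonneg_left hSle hK]
  · have hRξ : R ≤ |ξ| := le_trans (le_max_left _ _) hlt.le
    have h1 := hR ξ hRξ x hx η
    have h2 := hcoer x hx ξ η
    nlinarith [abs_nonneg (σ ξ)]
end
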